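/- Fix λ, μ > 0 and p > 0. The map λᵢ ↦ e^{−(λ+μ)p} + (λ+μ)/(a−b)·(e^{ap} − e^{bp}), where a, b are the roots of s² + (λ+μ)s + λᵢμ = 0, is strictly convex on the interval of λᵢ ∈ (0, λ] where (λ+μ)² > 4λᵢμ. -/

import Mathlib

noncomputable def PP (lam mu p li : ℝ) : ℝ :=
  let D := Real.sqrt ((lam + mu)^2 - 4 * li * mu)
  let a := (-(lam + mu) + D)/2
  let b := (-(lam + mu) - D)/2
  Real.exp (-(lam + mu) * p) + (lam + mu) / (a - b) * (Real.exp (a * p) - Real.exp (b * p))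

/-!
Writing `D = √((λ+μ)² - 4λᵢμ)`, the roots are `-(λ+μ)/2 ± D/2`, so
`PP = e^{-(λ+μ)p} + 2(λ+μ) e^{-(λ+μ)p/2} · sinh(t√u)/√u` with `t = p/2` and `u = D²`, an affine,
strictly decreasing function of `λᵢ`. In `u`, `sinh(t√u)/√u = ∑ t^{2n+1} uⁿ / (2n+1)!` is a power
series with positive coefficients, hence strictly convex on `u ≥ 0`; strict convexity survives
multiplication by a positive constant and precomposition with an injective affine map.
-/

open Real Set
open scoped Nat

theorem StrictConvexOn.comp_affineMap {𝕜 E F β : Type*} [Field 𝕜] [LinearOrder 𝕜]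
    [AddCommGroup E] [AddCommGroup F] [AddCommMonoid β] [PartialOrder β]
    [Module 𝕜 E] [Module 𝕜 F] [SMul 𝕜 β] {f : F → β} {s : Set F}
    (hf : StrictConvexOn 𝕜 s f) (g : E →ᵃ[𝕜] F) (hg : Function.Injective g) :
    StrictConvexOn 𝕜 (g ⁻¹' s) (f ∘ g) :=
  ⟨hf.1.affine_preimage _, fun x hx y hy hxy a b ha hb hab =>
    calc
      (f ∘ g) (a • x + b • y) = f (a • g x + b • g y) := by
        rw [Function.comp_apply, Convex.combo_affine_apply hab]
      _ < a • f (g x) + b • f (g y) := hf.2 hx hy (hg.ne hxy) ha hb hab⟩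

theorem StrictConvexOn.const_mul {𝕜 E : Type*} [Field 𝕜] [LinearOrder 𝕜] [IsStrictOrderedRing 𝕜]
    [AddCommMonoid E] [Module 𝕜 E] {s : Set E} {f : E → 𝕜} (hf : StrictConvexOn 𝕜 s f) {c : 𝕜}
    (hc : 0 < c) : StrictConvexOn 𝕜 s fun x => c * f x :=
  ⟨hf.1, fun x hx y hy hxy a b ha hb hab => by
    have := mul_lt_mul_of_pos_left (hf.2 hx hy hxy ha hb hab) hc
    simp only [smul_eq_mul] at this ⊢
    linarith⟩

theorem strictConvexOn_tsum_mul_pow {c : ℕ → ℝ} (hc : ∀ n, 0 ≤ c n) {k : ℕ} (hk : 2 ≤ k)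
    (hck : 0 < c k) (hsum : ∀ x, 0 ≤ x → Summable fun n => c n * x ^ n) :
    StrictConvexOn ℝ (Ici 0) fun x => ∑' n, c n * x ^ n := by
  refine ⟨convex_Ici 0, fun x hx y hy hxy a b ha hb hab => ?_⟩
  have hterm (n : ℕ) : c n * (a • x + b • y) ^ n ≤ a * (c n * x ^ n) + b * (c n * y ^ n) := by
    have := mul_le_mul_of_nonneg_left ((convexOn_pow n).2 hx hy ha.le hb.le hab) (hc n)
    simp only [smul_eq_mul] at this ⊢
    linarith
  have hterm_lt : c k * (a • x + b • y) ^ k < a * (c k * x ^ k) + b * (c k * y ^ k) := by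
    have := mul_lt_mul_of_pos_left ((strictConvexOn_pow hk).2 hx hy hxy ha hb hab) hck
    simp only [smul_eq_mul] at this ⊢
    linarith
  calc ∑' n, c n * (a • x + b • y) ^ n
      < ∑' n, (a * (c n * x ^ n) + b * (c n * y ^ n)) :=
        Summable.tsum_lt_tsum hterm hterm_lt (hsum _ (convex_Ici 0 hx hy ha.le hb.le hab))
          (((hsum x hx).mul_left a).add ((hsum y hy).mul_left b))
    _ = a • ∑' n, c n * x ^ n + b • ∑' n, c n * y ^ n := by
        rw [Summable.tsum_add ((hsum x hx).mul_left a) ((hsum y hy).mul_left b),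
          tsum_mul_left, tsum_mul_left, smul_eq_mul, smul_eq_mul]

theorem hasSum_sinh_mul_sqrt_div_sqrt (t : ℝ) {u : ℝ} (hu : 0 < u) :
    HasSum (fun n : ℕ => t ^ (2 * n + 1) / (2 * n + 1)! * u ^ n) (sinh (t * √u) / √u) := by
  have hs : √u ≠ 0 := (sqrt_pos.2 hu).ne'
  refine ((hasSum_sinh (t * √u)).div_const √u).congr_fun fun n => ?_
  rw [mul_pow, pow_succ √u, pow_mul, sq_sqrt hu.le]
  field_simp

theorem strictConvexOn_sinh_mul_sqrt_div_sqrt {t : ℝ} (ht : 0 < t) :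
    StrictConvexOn ℝ (Ioi 0) fun u => sinh (t * √u) / √u := by
  have hc (n : ℕ) : 0 ≤ t ^ (2 * n + 1) / (2 * n + 1)! := by positivity
  have hsum (x : ℝ) (hx : 0 ≤ x) : Summable fun n : ℕ => t ^ (2 * n + 1) / (2 * n + 1)! * x ^ n :=
    (hasSum_sinh_mul_sqrt_div_sqrt t (by linarith : 0 < x + 1)).summable.of_nonneg_of_le
      (fun n => by positivity) fun n => by gcongr; linarith
  refine ((strictConvexOn_tsum_mul_pow hc le_rfl (by positivity) hsum).subset Ioi_subset_Ici_self
    (convex_Ioi 0)).congr fun u hu => (hasSum_sinh_mul_sqrt_div_sqrt t hu).tsum_eq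

theorem PP_eq_sinh (lam mu p li : ℝ) :
    PP lam mu p li = exp (-(lam + mu) * p) + 2 * (lam + mu) * exp (-(lam + mu) * p / 2) *
      (sinh (p / 2 * √((lam + mu) ^ 2 - 4 * li * mu)) / √((lam + mu) ^ 2 - 4 * li * mu)) := by
  set D := √((lam + mu) ^ 2 - 4 * li * mu)
  have hplus : exp ((-(lam + mu) + D) / 2 * p) = exp (-(lam + mu) * p / 2) * exp (p / 2 * D) := by
    rw [← exp_add]; ring_nf
  have hminus :
      exp ((-(lam + mu) - D) / 2 * p) = exp (-(lam + mu) * p / 2) * exp (-(p / 2 * D)) := by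
    rw [← exp_add]; ring_nf
  simp only [PP]
  rw [hplus, hminus, sinh_eq, show (-(lam + mu) + D) / 2 - (-(lam + mu) - D) / 2 = D by ring]
  ring

theorem PP_strictConvex (lam mu p : ℝ) (hlam : 0 < lam) (hmu : 0 < mu) (hp : 0 < p) :
    StrictConvexOn ℝ
      {li | li ∈ Set.Ioc 0 lam ∧ 4 * li * mu < (lam + mu)^2}
      (PP lam mu p) := by
  let u : ℝ →ᵃ[ℝ] ℝ := AffineMap.lineMap ((lam + mu) ^ 2) ((lam + mu) ^ 2 - 4 * mu)
  have hu (li : ℝ) : u li = (lam + mu) ^ 2 - 4 * li * mu := by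
    simp only [u, AffineMap.lineMap_apply_ring']
    ring
  have hF := ((strictConvexOn_sinh_mul_sqrt_div_sqrt (half_pos hp)).const_mul
    (by positivity : 0 < 2 * (lam + mu) * exp (-(lam + mu) * p / 2))).comp_affineMap u
    (AffineMap.lineMap_injective ℝ (by linarith))
  have hset : {li | li ∈ Ioc 0 lam ∧ 4 * li * mu < (lam + mu) ^ 2} = Ioc 0 lam ∩ u ⁻¹' Ioi 0 := by
    ext li
    simp [hu]
  rw [hset]
  refine ((hF.subset inter_subset_right ((convex_Ioc 0 lam).inter
    ((convex_Ioi 0).affine_preimage u))).add_const (exp (-(lam + mu) * p))).congr fun li _ => ?_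
  simp only [Pi.add_apply, Function.comp_apply, hu, PP_eq_sinh]
  ring
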